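/- arXiv:1411.2620 — 2 statements merged into one kernel-verified Lean document; each statement's English description precedes it below -/
import Mathlib

section
/- Let γ > 0, p > 1 and ω > γ²/4. Then φ_ω(0)² = ( ((p+1)ω/2) · (1 - ξ(ω,γ)²) )^{2/(p-1)}, and ‖φ_ω‖_{L^{p+1}}^{p+1} = (4/((p-1)√ω)) · ((p+1)ω/2)^{(p+1)/(p-1)} · ∫_{ξ(ω,γ)}^1 (1 - s²)^{2/(p-1)} ds. -/
open MeasureTheory Set
open scoped ENNReal

noncomputable section

/-- Inverse hyperbolic tangent. -/
def artanh (x : ℝ) : ℝ := Real.log ((1 + x) / (1 - x)) / 2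

/-- Squared `L²` norm of `v`. -/
def l2Sq (v : ℝ → ℂ) : ℝ := ∫ x : ℝ, ‖v x‖ ^ 2

/-- Squared `L²` norm of the derivative of `v`. -/
def gradSq (v : ℝ → ℂ) : ℝ := ∫ x : ℝ, ‖deriv v x‖ ^ 2

/-- `∫ |v|^(p+1)`, i.e. `‖v‖_{L^{p+1}}^{p+1}`. -/
def lpPow (p : ℝ) (v : ℝ → ℂ) : ℝ := ∫ x : ℝ, ‖v x‖ ^ (p + 1)

/-- `v ∈ H¹(ℝ)`, expressed via its continuous representative: `v` is square
integrable, absolutely continuous with a.e. derivative `deriv v`, which is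
square integrable. -/
def MemH1 (v : ℝ → ℂ) : Prop :=
  Continuous v ∧ MemLp v 2 volume ∧ MemLp (deriv v) 2 volume ∧
    ∀ x : ℝ, v x = v 0 + ∫ t in (0:ℝ)..x, deriv v t

/-- The energy functional `E`. -/
def En (γ p : ℝ) (v : ℝ → ℂ) : ℝ :=
  gradSq v / 2 - γ / 2 * ‖v 0‖ ^ 2 - lpPow p v / (p + 1)

/-- The Nehari functional `K_ω`. -/
def Kfun (γ p ω : ℝ) (v : ℝ → ℂ) : ℝ :=
  gradSq v + ω * l2Sq v - γ * ‖v 0‖ ^ 2 - lpPow p v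

/-- The virial functional `P`. -/
def Pfun (γ p : ℝ) (v : ℝ → ℂ) : ℝ :=
  gradSq v - γ / 2 * ‖v 0‖ ^ 2 - (p - 1) / (2 * (p + 1)) * lpPow p v

/-- The action functional `S_ω`. -/
def Sfun (γ p ω : ℝ) (v : ℝ → ℂ) : ℝ := En γ p v + ω / 2 * l2Sq v

/-- The minimal action `d(ω)` on the Nehari manifold. -/
def dInf (γ p ω : ℝ) : ℝ :=
  sInf {s : ℝ | ∃ v : ℝ → ℂ, MemH1 v ∧ v ≠ 0 ∧ Kfun γ p ω v = 0 ∧ s = Sfun γ p ω v}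

/-- The explicit standing wave profile `φ_ω`. -/
def phi (γ p ω : ℝ) (x : ℝ) : ℝ :=
  ((p + 1) * ω / 2 *
      (1 / Real.cosh ((p - 1) * Real.sqrt ω / 2 * |x| + artanh (γ / (2 * Real.sqrt ω)))) ^ 2)
    ^ (1 / (p - 1))

/-- `φ_ω` as a complex valued function. -/
def phiC (γ p ω : ℝ) : ℝ → ℂ := fun x => (phi γ p ω x : ℂ)

/-- The `L²`-invariant scaling `v^λ(x) = λ^{1/2} v(λ x)`. -/
def scale (l : ℝ) (v : ℝ → ℂ) : ℝ → ℂ := fun x => (Real.sqrt l : ℂ) * v (l * x)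

/-- The set `𝓑_ω`. -/
def inB (γ p ω : ℝ) (v : ℝ → ℂ) : Prop :=
  MemH1 v ∧ 0 < En γ p v ∧ En γ p v < En γ p (phiC γ p ω) ∧
    l2Sq v = l2Sq (phiC γ p ω) ∧ Pfun γ p v < 0 ∧ Kfun γ p ω v < 0

/-!
Writing `ξ = γ / (2√ω) = tanh b`, the profile is `φ_ω(x) = (A sech²(c|x| + b))^{1/(p-1)}` with
`A = (p+1)ω/2` and `c = (p-1)√ω/2`. Since `sech² = 1 - tanh²`, the value at `0` is immediate, and
the substitution `s = tanh(cx + b)`, with `ds = c sech²(cx + b) dx`, maps the half-line `x > 0`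
onto `(ξ, 1)` and turns `∫ φ_ω^{p+1} = 2 A^{(p+1)/(p-1)} ∫_0^∞ sech^{2(p+1)/(p-1)}(cx + b) dx`
into the stated integral.
-/

theorem Real.hasDerivAt_tanh (x : ℝ) : HasDerivAt Real.tanh ((1 / Real.cosh x) ^ 2) x := by
  have h := (Real.hasDerivAt_sinh x).div (Real.hasDerivAt_cosh x) (Real.cosh_pos x).ne'
  rw [show Real.cosh x * Real.cosh x - Real.sinh x * Real.sinh x = 1 by
    nlinarith [Real.cosh_sq_sub_sinh_sq x], ← one_div_pow] at h
  exact h.congr_of_eventuallyEq (.of_forall fun y => Real.tanh_eq_sinh_div_cosh y)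

theorem Real.strictMono_tanh : StrictMono Real.tanh :=
  strictMono_of_hasDerivAt_pos Real.hasDerivAt_tanh fun x => by positivity

theorem Real.one_sub_tanh_sq (x : ℝ) : 1 - Real.tanh x ^ 2 = (1 / Real.cosh x) ^ 2 := by
  have hc : Real.cosh x ≠ 0 := (Real.cosh_pos x).ne'
  rw [Real.tanh_eq_sinh_div_cosh]
  field_simp
  linarith [Real.cosh_sq_sub_sinh_sq x]

theorem Real.one_div_cosh_artanh_sq {x : ℝ} (hx : x ∈ Ioo (-1) 1) :
    (1 / Real.cosh (Real.artanh x)) ^ 2 = 1 - x ^ 2 := by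
  have hx2 : 0 ≤ 1 - x ^ 2 := by nlinarith [hx.1, hx.2]
  rw [Real.cosh_artanh hx, one_div_one_div, Real.sq_sqrt hx2]

theorem artanh_eq_real_artanh {x : ℝ} (hx : x ∈ Ioo (-1) 1) : artanh x = Real.artanh x := by
  rw [artanh, Real.artanh_eq_half_log (Ioo_subset_Icc_self hx)]
  ring

theorem image_tanh_mul_add_Ioi {c : ℝ} (hc : 0 < c) (b : ℝ) :
    (fun x => Real.tanh (c * x + b)) '' Ioi 0 = Ioo (Real.tanh b) 1 := by
  ext s
  constructor
  · rintro ⟨x, hx, rfl⟩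
    exact ⟨Real.strictMono_tanh (by nlinarith [mem_Ioi.mp hx]), Real.tanh_lt_one _⟩
  · rintro ⟨hbs, hs1⟩
    have hs : s ∈ Ioo (-1) 1 := ⟨(Real.neg_one_lt_tanh b).trans hbs, hs1⟩
    have hb : b < Real.artanh s := by
      rwa [← Real.strictMono_tanh.lt_iff_lt, Real.tanh_artanh hs]
    refine ⟨(Real.artanh s - b) / c, div_pos (by linarith) hc, ?_⟩
    simp only [mul_div_cancel₀ _ hc.ne', sub_add_cancel, Real.tanh_artanh hs]

theorem intervalIntegral_one_sub_sq_rpow_eq {c : ℝ} (hc : 0 < c) (b r : ℝ) :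
    ∫ s in Real.tanh b..1, (1 - s ^ 2) ^ r =
      c * ∫ x in Ioi 0, ((1 / Real.cosh (c * x + b)) ^ 2) ^ (r + 1) := by
  have hderiv : ∀ x ∈ Ioi (0 : ℝ), HasDerivWithinAt (fun x => Real.tanh (c * x + b))
      ((1 / Real.cosh (c * x + b)) ^ 2 * c) (Ioi 0) x := fun x _ =>
    ((Real.hasDerivAt_tanh _).comp x
      (((hasDerivAt_id x).const_mul c).add_const b |>.congr_deriv (mul_one c))).hasDerivWithinAt
  have hinj : InjOn (fun x => Real.tanh (c * x + b)) (Ioi 0) := fun x _ y _ hxy =>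
    mul_left_cancel₀ hc.ne' (add_right_cancel (Real.strictMono_tanh.injective hxy))
  rw [intervalIntegral.integral_of_le (Real.tanh_lt_one b).le, integral_Ioc_eq_integral_Ioo,
    ← image_tanh_mul_add_Ioi hc b,
    integral_image_eq_integral_abs_deriv_smul measurableSet_Ioi hderiv hinj,
    ← integral_const_mul]
  refine setIntegral_congr_fun measurableSet_Ioi fun x _ => ?_
  have hsech : (1 / Real.cosh (c * x + b)) ^ 2 ≠ 0 := by positivity
  rw [Real.one_sub_tanh_sq, Real.rpow_add_one hsech, smul_eq_mul,
    abs_of_pos (by positivity)]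
  ring

theorem phi_rpow_eq (γ : ℝ) {p ω : ℝ} (hA : 0 ≤ (p + 1) * ω) (x : ℝ) :
    phi γ p ω x ^ (p + 1) =
      ((p + 1) * ω / 2) ^ ((p + 1) / (p - 1)) *
        ((1 / Real.cosh ((p - 1) * Real.sqrt ω / 2 * |x| + artanh (γ / (2 * Real.sqrt ω)))) ^ 2)
          ^ ((p + 1) / (p - 1)) := by
  rw [phi, ← Real.rpow_mul (by positivity), one_div_mul_eq_div, Real.mul_rpow (by linarith)
    (by positivity)]

theorem integral_phi_rpow_eq (γ : ℝ) {p ω : ℝ} (hA : 0 ≤ (p + 1) * ω) :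
    ∫ x, phi γ p ω x ^ (p + 1) =
      2 * ((p + 1) * ω / 2) ^ ((p + 1) / (p - 1)) * ∫ x in Ioi 0,
        ((1 / Real.cosh ((p - 1) * Real.sqrt ω / 2 * x + artanh (γ / (2 * Real.sqrt ω)))) ^ 2)
          ^ ((p + 1) / (p - 1)) := by
  simp_rw [phi_rpow_eq γ hA]
  rw [integral_comp_abs (f := fun y => _ * ((1 / Real.cosh (_ * y + _)) ^ 2) ^ _),
    integral_const_mul, mul_assoc]

theorem phi_zero_sq {γ p ω : ℝ} (hA : 0 ≤ (p + 1) * ω)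
    (hξ : γ / (2 * Real.sqrt ω) ∈ Ioo (-1) 1) :
    phi γ p ω 0 ^ 2 =
      ((p + 1) * ω / 2 * (1 - (γ / (2 * Real.sqrt ω)) ^ 2)) ^ (2 / (p - 1)) := by
  have hξ2 : 0 ≤ 1 - (γ / (2 * Real.sqrt ω)) ^ 2 := by nlinarith [hξ.1, hξ.2]
  rw [phi, abs_zero, mul_zero, zero_add, artanh_eq_real_artanh hξ, Real.one_div_cosh_artanh_sq hξ,
    ← Real.rpow_mul_natCast (by positivity)]
  congr 1
  push_cast
  ring

theorem stmt3_general (γ p ω : ℝ) (hp : 1 < p) (hω : γ ^ 2 / 4 < ω) :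
    phi γ p ω 0 ^ 2 =
      ((p + 1) * ω / 2 * (1 - (γ / (2 * Real.sqrt ω)) ^ 2)) ^ (2 / (p - 1)) ∧
    (∫ x : ℝ, phi γ p ω x ^ (p + 1)) =
      4 / ((p - 1) * Real.sqrt ω) * ((p + 1) * ω / 2) ^ ((p + 1) / (p - 1)) *
        ∫ s in (γ / (2 * Real.sqrt ω))..1, (1 - s ^ 2) ^ (2 / (p - 1)) := by
  have hω0 : 0 < ω := lt_of_le_of_lt (by positivity) hω
  have hA : 0 ≤ (p + 1) * ω := by nlinarith
  have hξ : γ / (2 * Real.sqrt ω) ∈ Ioo (-1) 1 := by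
    refine abs_lt.mp ((sq_lt_one_iff_abs_lt_one _).mp ?_)
    rw [div_pow, mul_pow, Real.sq_sqrt hω0.le, div_lt_one (by positivity)]
    linarith
  refine ⟨phi_zero_sq hA hξ, ?_⟩
  have hp1 : 0 < p - 1 := sub_pos.mpr hp
  have hc : 0 < (p - 1) * Real.sqrt ω / 2 := by positivity
  have hq : 2 / (p - 1) + 1 = (p + 1) / (p - 1) := by
    field_simp [hp1.ne']
    ring
  have hsub := intervalIntegral_one_sub_sq_rpow_eq hc
    (Real.artanh (γ / (2 * Real.sqrt ω))) (2 / (p - 1))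
  rw [Real.tanh_artanh hξ, hq, ← artanh_eq_real_artanh hξ] at hsub
  rw [integral_phi_rpow_eq γ hA, hsub]
  field_simp
  ring

/-- `φ_ω(0)²` and the `L^{p+1}` norm of `φ_ω`. -/
theorem stmt3 (γ p ω : ℝ) (hγ : 0 < γ) (hp : 1 < p) (hω : γ ^ 2 / 4 < ω) :
    phi γ p ω 0 ^ 2 =
      ((p + 1) * ω / 2 * (1 - (γ / (2 * Real.sqrt ω)) ^ 2)) ^ (2 / (p - 1)) ∧
    (∫ x : ℝ, phi γ p ω x ^ (p + 1)) =
      4 / ((p - 1) * Real.sqrt ω) * ((p + 1) * ω / 2) ^ ((p + 1) / (p - 1)) *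
        ∫ s in (γ / (2 * Real.sqrt ω))..1, (1 - s ^ 2) ^ (2 / (p - 1)) :=
  stmt3_general γ p ω hp hω
end
end

section
/- Let γ > 0, p > 5 and ω > γ²/4. Assume E(φ_ω) > 0 and S_ω(φ_ω) = d(ω). Let T ∈ (0,∞], and let u : [0,T) → H¹(ℝ) be a map such that for all t ∈ [0,T): E(u(t)) = E(u(0)) and ‖u(t)‖_{L²} = ‖u(0)‖_{L²}, and such that t ↦ K_ω(u(t)) and t ↦ P(u(t)) are continuous on [0,T). If u(0) ∈ 𝓑_ω, then u(t) ∈ 𝓑_ω for all t ∈ [0,T). -/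
open MeasureTheory Set
open scoped ENNReal

noncomputable section

/-!
Mass and energy are conserved, so `S_ω(u t) = S_ω(u 0) < S_ω(φ_ω) = d(ω)` for all `t`. The
continuous function `max (K_ω(u t)) (P(u t))` starts negative; if it reached `0` at some time, then
either `K_ω(u t) = 0`, which puts `u t` on the Nehari manifold with action below `d(ω)`, or
`K_ω(u t) < 0 = P(u t)`. In the second case the `L²`-invariant scaling `v^l = l^{1/2} v(l ·)` reaches
the Nehari manifold for some `l > 0`, while `P = 0`, `E > 0` and `p ≥ 5` make `l = 1` the maximum of
`l ↦ S_ω(v^l)`, so again `d(ω) ≤ S_ω(u t)`.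
-/

section Scaling

variable {l : ℝ}

lemma norm_scale (v : ℝ → ℂ) (x : ℝ) :
    ‖scale l v x‖ = Real.sqrt l * ‖v (l * x)‖ := by
  rw [scale, norm_mul, Complex.norm_real, Real.norm_of_nonneg (Real.sqrt_nonneg l)]

lemma deriv_scale (v : ℝ → ℂ) :
    deriv (scale l v) = scale l (fun x => (l : ℂ) * deriv v x) := by
  ext x
  change deriv (fun y => (Real.sqrt l : ℂ) * v (l * y)) x = _
  rw [deriv_const_mul_field, deriv_comp_mul_left, Complex.real_smul]
  rfl

lemma l2Sq_scale (hl : 0 < l) (v : ℝ → ℂ) : l2Sq (scale l v) = l2Sq v := by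
  simp only [l2Sq, norm_scale, mul_pow, Real.sq_sqrt hl.le]
  rw [integral_const_mul, Measure.integral_comp_mul_left (fun y => ‖v y‖ ^ 2),
    abs_of_pos (inv_pos.mpr hl), smul_eq_mul, mul_inv_cancel_left₀ hl.ne']

lemma gradSq_scale (hl : 0 < l) (v : ℝ → ℂ) : gradSq (scale l v) = l ^ 2 * gradSq v := by
  have h := l2Sq_scale hl (fun x => (l : ℂ) * deriv v x)
  simp only [l2Sq, norm_mul, Complex.norm_real, Real.norm_of_nonneg hl.le, mul_pow,
    integral_const_mul] at h
  rwa [gradSq, deriv_scale]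

lemma lpPow_scale (hl : 0 < l) (p : ℝ) (v : ℝ → ℂ) :
    lpPow p (scale l v) = l ^ ((p - 1) / 2) * lpPow p v := by
  have hpow : Real.sqrt l ^ (p + 1) = l ^ ((p - 1) / 2) * l := by
    rw [Real.sqrt_eq_rpow, ← Real.rpow_mul hl.le, ← Real.rpow_add_one hl.ne']
    ring_nf
  simp only [lpPow, norm_scale, Real.mul_rpow (Real.sqrt_nonneg l) (norm_nonneg _), hpow]
  rw [integral_const_mul, Measure.integral_comp_mul_left (fun y => ‖v y‖ ^ (p + 1)),
    abs_of_pos (inv_pos.mpr hl), smul_eq_mul, mul_assoc, mul_inv_cancel_left₀ hl.ne']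

lemma norm_scale_zero_sq (hl : 0 ≤ l) (v : ℝ → ℂ) : ‖scale l v 0‖ ^ 2 = l * ‖v 0‖ ^ 2 := by
  rw [norm_scale, mul_zero, mul_pow, Real.sq_sqrt hl]

lemma memLp_two_scale (hl : 0 < l) {v : ℝ → ℂ} (hv : MemLp v 2 volume) :
    MemLp (scale l v) 2 volume := by
  have hm : AEStronglyMeasurable (fun x => v (l * x)) volume :=
    hv.1.comp_quasiMeasurePreserving (Measure.quasiMeasurePreserving_smul volume hl.ne')
  refine MemLp.const_mul ?_ _
  rw [memLp_two_iff_integrable_sq_norm hm]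
  exact (integrable_comp_mul_left_iff (fun y => ‖v y‖ ^ 2) hl.ne').mpr
    ((memLp_two_iff_integrable_sq_norm hv.1).mp hv)

lemma memH1_scale (hl : 0 < l) {v : ℝ → ℂ} (hv : MemH1 v) : MemH1 (scale l v) := by
  obtain ⟨hcont, hL2, hdL2, hftc⟩ := hv
  refine ⟨continuous_const.mul (hcont.comp (continuous_const_mul l)), memLp_two_scale hl hL2, ?_,
    fun x => ?_⟩
  · rw [deriv_scale]
    exact memLp_two_scale hl (hdL2.const_mul _)
  · have hl' : (l : ℂ) ≠ 0 := Complex.ofReal_ne_zero.mpr hl.ne'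
    simp only [deriv_scale, scale, intervalIntegral.integral_const_mul, mul_zero,
      intervalIntegral.integral_comp_mul_left (deriv v) hl.ne', Complex.real_smul]
    rw [hftc (l * x)]
    push_cast
    field_simp

lemma scale_ne_zero (hl : 0 < l) {v : ℝ → ℂ} (hv : v ≠ 0) : scale l v ≠ 0 := by
  contrapose! hv
  ext y
  have h := congrFun hv (l⁻¹ * y)
  simp only [scale, Pi.zero_apply, mul_inv_cancel_left₀ hl.ne', mul_eq_zero,
    Complex.ofReal_eq_zero, Real.sqrt_eq_zero', not_le.mpr hl, false_or] at h
  simpa using h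

end Scaling

lemma l2Sq_nonneg (v : ℝ → ℂ) : 0 ≤ l2Sq v := integral_nonneg fun _ => by positivity

lemma lpPow_nonneg (p : ℝ) (v : ℝ → ℂ) : 0 ≤ lpPow p v := integral_nonneg fun _ => by positivity

lemma l2Sq_pos {v : ℝ → ℂ} (hv : MemH1 v) (hne : v ≠ 0) : 0 < l2Sq v := by
  refine (l2Sq_nonneg v).lt_of_ne fun h => hne ?_
  have hint : Integrable (fun x => ‖v x‖ ^ 2) volume :=
    (memLp_two_iff_integrable_sq_norm hv.1.aestronglyMeasurable).mp hv.2.1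
  have hae : (fun x => ‖v x‖ ^ 2) =ᵐ[volume] 0 :=
    (integral_eq_zero_iff_of_nonneg (fun _ => by positivity) hint).mp h.symm
  have h0 := (Continuous.ae_eq_iff_eq volume (hv.1.norm.pow 2) continuous_zero).mp hae
  ext x
  simpa using congrFun h0 x

lemma En_zero (γ : ℝ) {p : ℝ} (hp : 0 < p + 1) : En γ p (0 : ℝ → ℂ) = 0 := by
  simp [En, gradSq, lpPow, Real.zero_rpow hp.ne']

lemma mul_one_add_mul_sub_one_le_rpow {l q : ℝ} (hl : 0 ≤ l) (hq : 2 ≤ q) :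
    l * (1 + (q - 1) * (l - 1)) ≤ l ^ q := by
  have h := one_add_mul_self_le_rpow_one_add (s := l - 1) (by linarith) (p := q - 1) (by linarith)
  rw [add_sub_cancel] at h
  calc l * (1 + (q - 1) * (l - 1)) ≤ l * l ^ (q - 1) := mul_le_mul_of_nonneg_left h hl
    _ = l ^ q := by rw [← Real.rpow_one_add' hl (by linarith), add_sub_cancel]

section Functionals

variable {γ p ω l : ℝ} {v : ℝ → ℂ}

lemma Kfun_scale (hl : 0 < l) : Kfun γ p ω (scale l v) =
    l ^ 2 * gradSq v + ω * l2Sq v - l * (γ * ‖v 0‖ ^ 2) - l ^ ((p - 1) / 2) * lpPow p v := by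
  rw [Kfun, gradSq_scale hl, l2Sq_scale hl, lpPow_scale hl, norm_scale_zero_sq hl.le]
  ring

lemma Sfun_scale (hl : 0 < l) : Sfun γ p ω (scale l v) = l ^ 2 * gradSq v / 2
    - l * (γ / 2 * ‖v 0‖ ^ 2) - l ^ ((p - 1) / 2) * lpPow p v / (p + 1) + ω / 2 * l2Sq v := by
  rw [Sfun, En, gradSq_scale hl, l2Sq_scale hl, lpPow_scale hl, norm_scale_zero_sq hl.le]
  ring

/-- `P v = 0` makes `l = 1` a critical point of `l ↦ S_ω(v^l)`; Bernoulli's inequality for the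
exponent `(p - 1) / 2 - 1 ≥ 1` together with `E v ≥ 0` makes it a global maximum. -/
lemma Sfun_scale_le_of_Pfun_eq_zero (hp : 5 ≤ p) (hP : Pfun γ p v = 0) (hE : 0 ≤ En γ p v)
    (hl : 0 < l) : Sfun γ p ω (scale l v) ≤ Sfun γ p ω v := by
  have hp1 : 0 < p + 1 := by linarith
  have hbern := mul_one_add_mul_sub_one_le_rpow hl.le (q := (p - 1) / 2) (by linarith)
  have hM : 0 ≤ lpPow p v / (p + 1) := div_nonneg (lpPow_nonneg p v) hp1.le
  have hPM : γ / 2 * ‖v 0‖ ^ 2 = gradSq v - (p - 1) / 2 * (lpPow p v / (p + 1)) := by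
    rw [Pfun] at hP
    field_simp at hP ⊢
    linarith
  have hGM : gradSq v / 2 ≤ ((p - 1) / 2 - 1) * (lpPow p v / (p + 1)) := by
    rw [En, hPM] at hE
    linarith
  have hdiff : Sfun γ p ω v - Sfun γ p ω (scale l v) =
      lpPow p v / (p + 1) * (l ^ ((p - 1) / 2) - l * (1 + ((p - 1) / 2 - 1) * (l - 1)))
      + (1 - l) ^ 2 * (((p - 1) / 2 - 1) * (lpPow p v / (p + 1)) - gradSq v / 2) := by
    rw [Sfun_scale hl, Sfun, En]
    linear_combination (l - 1) * hPM
  nlinarith [mul_nonneg hM (sub_nonneg.mpr hbern),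
    mul_nonneg (sq_nonneg (1 - l)) (sub_nonneg.mpr hGM)]

lemma exists_pos_Kfun_scale_eq_zero (hp : 1 < p) (hω : 0 < ω) (hv : MemH1 v) (hne : v ≠ 0)
    (hK : Kfun γ p ω v < 0) : ∃ l, 0 < l ∧ Kfun γ p ω (scale l v) = 0 := by
  set k : ℝ → ℝ := fun l =>
    l ^ 2 * gradSq v + ω * l2Sq v - l * (γ * ‖v 0‖ ^ 2) - l ^ ((p - 1) / 2) * lpPow p v
  have hk : Continuous k := by
    have : Continuous fun l : ℝ => l ^ ((p - 1) / 2) :=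
      Real.continuous_rpow_const (by linarith)
    fun_prop
  have hk0 : k 0 = ω * l2Sq v := by
    simp [k, Real.zero_rpow (by linarith : (p - 1) / 2 ≠ 0)]
  have hk1 : k 1 = Kfun γ p ω v := by
    simp [k, Kfun]
  obtain ⟨l, hl, hkl⟩ := intermediate_value_Ioo' zero_le_one hk.continuousOn
    ⟨hk1 ▸ hK, hk0 ▸ mul_pos hω (l2Sq_pos hv hne)⟩
  exact ⟨l, hl.1, by rw [Kfun_scale hl.1]; exact hkl⟩

end Functionals

section Nehari

variable {γ p ω : ℝ} {v : ℝ → ℂ}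

/-- A set of reals that is not bounded below has `sInf = 0`, so `dInf ≠ 0` supplies the bound. -/
lemma dInf_le_Sfun (hd : dInf γ p ω ≠ 0) (hv : MemH1 v) (hne : v ≠ 0) (hK : Kfun γ p ω v = 0) :
    dInf γ p ω ≤ Sfun γ p ω v := by
  refine csInf_le ?_ ⟨v, hv, hne, hK, rfl⟩
  by_contra hbdd
  exact hd (Real.sInf_of_not_bddBelow hbdd)

lemma dInf_le_Sfun_of_Pfun_eq_zero (hp : 5 ≤ p) (hω : 0 < ω) (hd : dInf γ p ω ≠ 0)
    (hv : MemH1 v) (hne : v ≠ 0) (hK : Kfun γ p ω v < 0) (hP : Pfun γ p v = 0)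
    (hE : 0 ≤ En γ p v) : dInf γ p ω ≤ Sfun γ p ω v := by
  obtain ⟨l, hl, hKl⟩ := exists_pos_Kfun_scale_eq_zero (by linarith) hω hv hne hK
  calc dInf γ p ω ≤ Sfun γ p ω (scale l v) :=
        dInf_le_Sfun hd (memH1_scale hl hv) (scale_ne_zero hl hne) hKl
    _ ≤ Sfun γ p ω v := Sfun_scale_le_of_Pfun_eq_zero hp hP hE hl

lemma dInf_le_Sfun_of_max_Kfun_Pfun_eq_zero (hp : 5 ≤ p) (hω : 0 < ω) (hd : dInf γ p ω ≠ 0)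
    (hv : MemH1 v) (hE : 0 < En γ p v) (hmax : max (Kfun γ p ω v) (Pfun γ p v) = 0) :
    dInf γ p ω ≤ Sfun γ p ω v := by
  have hne : v ≠ 0 := by
    rintro rfl
    exact hE.ne' (En_zero γ (by linarith))
  rcases (le_max_left _ _).trans hmax.le |>.lt_or_eq with hK | hK
  · have hP : Pfun γ p v = 0 := by
      rcases max_cases (Kfun γ p ω v) (Pfun γ p v) with h | h
      · exact absurd (h.1 ▸ hmax) hK.ne
      · exact h.1 ▸ hmax
    exact dInf_le_Sfun_of_Pfun_eq_zero hp hω hd hv hne hK hP hE.le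
  · exact dInf_le_Sfun hd hv hne hK

end Nehari

lemma neg_of_continuousOn_Icc_of_ne_zero {f : ℝ → ℝ} {a b : ℝ} (hab : a ≤ b)
    (hf : ContinuousOn f (Icc a b)) (ha : f a < 0) (hne : ∀ t ∈ Icc a b, f t ≠ 0) : f b < 0 := by
  by_contra! hb
  obtain ⟨t, ht, hft⟩ := intermediate_value_Icc hab hf ⟨ha.le, hb⟩
  exact hne t ht hft

theorem stmt10_general (γ p ω : ℝ) (hp : 5 < p) (hω : γ ^ 2 / 4 < ω)
    (hd : Sfun γ p ω (phiC γ p ω) = dInf γ p ω)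
    (T : ℝ≥0∞) (u : ℝ → ℝ → ℂ)
    (hu : ∀ t : ℝ, 0 ≤ t → ENNReal.ofReal t < T → MemH1 (u t))
    (hcons : ∀ t : ℝ, 0 ≤ t → ENNReal.ofReal t < T →
      En γ p (u t) = En γ p (u 0) ∧ l2Sq (u t) = l2Sq (u 0))
    (hKcont : ContinuousOn (fun t => Kfun γ p ω (u t))
      {t : ℝ | 0 ≤ t ∧ ENNReal.ofReal t < T})
    (hPcont : ContinuousOn (fun t => Pfun γ p (u t))
      {t : ℝ | 0 ≤ t ∧ ENNReal.ofReal t < T})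
    (h0 : inB γ p ω (u 0)) :
    ∀ t : ℝ, 0 ≤ t → ENNReal.ofReal t < T → inB γ p ω (u t) := by
  obtain ⟨-, hE0, hE0φ, hL0, hP0, hK0⟩ := h0
  have hω0 : 0 < ω := lt_of_le_of_lt (by positivity) hω
  have hd0 : dInf γ p ω ≠ 0 := by
    rw [← hd, Sfun]
    nlinarith [l2Sq_nonneg (phiC γ p ω)]
  have hS : ∀ t, 0 ≤ t → ENNReal.ofReal t < T → Sfun γ p ω (u t) < dInf γ p ω := by
    intro t ht htT
    obtain ⟨hE, hL⟩ := hcons t ht htT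
    rw [← hd, Sfun, Sfun, hE, hL, hL0]
    linarith
  have hmax : ∀ t, 0 ≤ t → ENNReal.ofReal t < T →
      max (Kfun γ p ω (u t)) (Pfun γ p (u t)) < 0 := by
    intro t ht htT
    have hsub : Icc 0 t ⊆ {t : ℝ | 0 ≤ t ∧ ENNReal.ofReal t < T} :=
      fun r hr => ⟨hr.1, (ENNReal.ofReal_le_ofReal hr.2).trans_lt htT⟩
    refine neg_of_continuousOn_Icc_of_ne_zero
      (f := fun t => max (Kfun γ p ω (u t)) (Pfun γ p (u t))) ht
      ((hKcont.sup hPcont).mono hsub) (max_lt hK0 hP0) fun r hr hr0 => ?_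
    obtain ⟨hr, hrT⟩ := hsub hr
    exact (hS r hr hrT).not_ge <| dInf_le_Sfun_of_max_Kfun_Pfun_eq_zero hp.le hω0 hd0
      (hu r hr hrT) ((hcons r hr hrT).1 ▸ hE0) hr0
  intro t ht htT
  obtain ⟨hE, hL⟩ := hcons t ht htT
  have hKP := hmax t ht htT
  exact ⟨hu t ht htT, hE ▸ hE0, hE ▸ hE0φ, hL ▸ hL0, (le_max_right _ _).trans_lt hKP,
    (le_max_left _ _).trans_lt hKP⟩

/-- the set `𝓑_ω` is invariant under the flow. -/
theorem stmt10 (γ p ω : ℝ) (hγ : 0 < γ) (hp : 5 < p) (hω : γ ^ 2 / 4 < ω)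
    (hEφ : 0 < En γ p (phiC γ p ω)) (hd : Sfun γ p ω (phiC γ p ω) = dInf γ p ω)
    (T : ℝ≥0∞) (hT : 0 < T) (u : ℝ → ℝ → ℂ)
    (hu : ∀ t : ℝ, 0 ≤ t → ENNReal.ofReal t < T → MemH1 (u t))
    (hcons : ∀ t : ℝ, 0 ≤ t → ENNReal.ofReal t < T →
      En γ p (u t) = En γ p (u 0) ∧ l2Sq (u t) = l2Sq (u 0))
    (hKcont : ContinuousOn (fun t => Kfun γ p ω (u t))
      {t : ℝ | 0 ≤ t ∧ ENNReal.ofReal t < T})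
    (hPcont : ContinuousOn (fun t => Pfun γ p (u t))
      {t : ℝ | 0 ≤ t ∧ ENNReal.ofReal t < T})
    (h0 : inB γ p ω (u 0)) :
    ∀ t : ℝ, 0 ≤ t → ENNReal.ofReal t < T → inB γ p ω (u t) :=
  stmt10_general γ p ω hp hω hd T u hu hcons hKcont hPcont h0
end
end
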